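/- arXiv:2102.10941 — 2 statements merged into one kernel-verified Lean document; each statement's English description precedes it below -/
import Mathlib

section
/- Let ℓ ∈ ℕ, ν ∈ ℂ, and let φ_ℓ(x) = c₁|x|^{2(ℓ+1)−d} + c₂|x|^{2(ℓ+1)−d}log|x| (c₁,c₂ ∈ ℝ) be a radial polyharmonic kernel, and define the Bernoulli symbol a_ν^{(ℓ)}(y,z) = |z|^{−ν} ( φ_ℓ(y−z) − Σ_{k=0}^{2ℓ+1} (1/k!) ⟨−z,∇⟩^k φ_ℓ(y) ). Then for every multi-index α ∈ ℕ^d and every compact set K ⊆ ℝ^d∖{0} there exist R > 0 and C > 0 (depending only on ℓ, ν, α, K) such that |D_z^α a_ν^{(ℓ)}(y,z)| ≤ C |z|^{2(ℓ+1) − Re ν − |α|} for all z with |z| > R and all y ∈ K. -/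
open MeasureTheory Filter Topology Metric Real
open scoped RealInnerProductSpace FourierTransform Pointwise Matrix ContDiff

noncomputable section

/-- Euclidean space `ℝ^d`. -/
abbrev Eu (d : ℕ) : Type := EuclideanSpace ℝ (Fin d)

variable {d : ℕ}

/-- The Laplacian of a complex-valued function on `ℝ^d`. -/
def lap (f : Eu d → ℂ) (x : Eu d) : ℂ :=
  ∑ i : Fin d, iteratedFDeriv ℝ 2 f x ![EuclideanSpace.single i 1, EuclideanSpace.single i 1]

/-- The Laplacian within a set (using derivatives within `s`). -/
def lapOn (s : Set (Eu d)) (f : Eu d → ℂ) (x : Eu d) : ℂ :=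
  ∑ i : Fin d, iteratedFDerivWithin ℝ 2 f s x ![EuclideanSpace.single i 1, EuclideanSpace.single i 1]

/-- The point `M n` of the lattice `M ℤ^d`. -/
def lpt (M : Matrix (Fin d) (Fin d) ℝ) (n : Fin d → ℤ) : Eu d :=
  (EuclideanSpace.equiv (Fin d) ℝ).symm (M.mulVec fun i => (n i : ℝ))

/-- The character `e^{-2πi⟨z,y⟩}`. -/
def eChar (z y : Eu d) : ℂ := Complex.exp ((-(2 * π * ⟪z, y⟫) : ℝ) * Complex.I)

/-- A mollifier: a nonnegative rotationally invariant test function supported in the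
open unit ball with unit integral. -/
def IsMollifier (χ : Eu d → ℝ) : Prop :=
  ContDiff ℝ ∞ χ ∧ tsupport χ ⊆ Metric.ball 0 1 ∧ (∀ x, 0 ≤ χ x) ∧
    (∀ x y : Eu d, ‖x‖ = ‖y‖ → χ x = χ y) ∧ (∫ x, χ x) = 1

/-- The rescaled mollifier `χ_β = β^{-d} χ(·/β)`. -/
def mollify (χ : Eu d → ℝ) (β : ℝ) (x : Eu d) : ℝ := (β ^ d)⁻¹ * χ (β⁻¹ • x)

/-- The smooth cutoff function `χ̂_β`, the Fourier transform of `χ_β`. -/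
def cutoff (χ : Eu d → ℝ) (β : ℝ) : Eu d → ℂ :=
  𝓕 (fun x => ((mollify χ β x : ℝ) : ℂ))

/-- First-order partial derivative in the `i`-th coordinate direction. -/
def pderiv1 (i : Fin d) (f : Eu d → ℂ) (x : Eu d) : ℂ := fderiv ℝ f x (EuclideanSpace.single i 1)

/-- The partial derivative `D^α` of multi-order `α`. -/
def mderiv (α : Fin d → ℕ) (f : Eu d → ℂ) : Eu d → ℂ :=
  ((List.ofFn fun i : Fin d => (pderiv1 i)^[α i]).foldr (· ∘ ·) id) f

/-- The total order `|α|` of a multi-index. -/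
def mdeg (α : Fin d → ℕ) : ℕ := ∑ i, α i

/-- Test functions on an open set `Ω`: smooth functions compactly supported inside `Ω`. -/
def IsTest (Ω : Set (Eu d)) (ψ : Eu d → ℂ) : Prop :=
  ContDiff ℝ ∞ ψ ∧ HasCompactSupport ψ ∧ tsupport ψ ⊆ Ω

/-- Convergence in `C^∞(Ω)`: all derivatives converge uniformly on compact subsets of `Ω`. -/
def ConvCinftyOn (Ω : Set (Eu d)) (f : ℕ → Eu d → ℂ) (v : Eu d → ℂ) : Prop :=
  ∀ K : Set (Eu d), IsCompact K → K ⊆ Ω → ∀ n : ℕ,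
    TendstoUniformlyOn (fun j x => iteratedFDerivWithin ℝ n (f j) Ω x)
      (fun x => iteratedFDerivWithin ℝ n v Ω x) atTop K


/-!
No cancellation between the kernel and its Taylor polynomial is needed. For large `|z|` the kernel
term `φ(y - z)` is `O(|z|^{2ℓ+2-d} log |z|) = O(|z|^{2ℓ+2})` because `d ≥ 1`, the Taylor terms are
polynomials in `z` of degree at most `2ℓ+1`, and every `z`-derivative lowers these growth orders by
one. To make this bookkeeping mechanical, the symbol is written as an expression tree built from
`|z - v|^w`, `log |z - v|`, affine functions `⟨u, z - v⟩` and constants; its partial derivatives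
are again such trees, and a bound `C |z|^s` valid beyond some radius is read off structurally.
The constant is uniform in `y ∈ K` because the tree for `y` is dominated, parameter by parameter,
by a tree of the same shape built from bounds on `K`.
-/

lemma rpow_le_two_rpow_abs_mul_rpow {r Z a : ℝ} (hZ : 0 < Z) (h₁ : Z / 2 ≤ r) (h₂ : r ≤ 2 * Z) :
    r ^ a ≤ 2 ^ |a| * Z ^ a := by
  have hr : 0 < r := by linarith
  rcases le_or_gt 0 a with ha | ha
  · calc r ^ a ≤ (2 * Z) ^ a := Real.rpow_le_rpow hr.le h₂ ha
      _ = 2 ^ a * Z ^ a := Real.mul_rpow zero_le_two hZ.le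
      _ = 2 ^ |a| * Z ^ a := by rw [abs_of_nonneg ha]
  · calc r ^ a ≤ (Z / 2) ^ a := Real.rpow_le_rpow_of_nonpos (by linarith) h₁ ha.le
      _ = 2 ^ (-a) * Z ^ a := by
          rw [Real.div_rpow hZ.le zero_le_two, Real.rpow_neg zero_le_two]; ring
      _ = 2 ^ |a| * Z ^ a := by rw [abs_of_neg ha]

lemma norm_sub_bounds {E : Type*} [SeminormedAddCommGroup E] {v z : E} (h : 2 * ‖v‖ + 2 < ‖z‖) :
    ‖z‖ / 2 ≤ ‖z - v‖ ∧ ‖z - v‖ ≤ 2 * ‖z‖ ∧ 1 < ‖z - v‖ := by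
  have := norm_nonneg v
  have := norm_sub_norm_le z v
  have := norm_sub_le z v
  exact ⟨by linarith, by linarith, by linarith⟩

lemma hasFDerivAt_log_norm_sub {E : Type*} [NormedAddCommGroup E] [InnerProductSpace ℝ E]
    {v z : E} (h : z ≠ v) :
    HasFDerivAt (fun x => Real.log ‖x - v‖) ((‖z - v‖ ^ 2)⁻¹ • innerSL ℝ (z - v)) z := by
  have hz : ‖z - v‖ ^ 2 ≠ 0 := by simpa [sub_eq_zero] using h
  have hsq := (((hasFDerivAt_id z).sub_const v).norm_sq.log hz).const_mul (1 / 2 : ℝ)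
  have hfun : (fun x => Real.log ‖x - v‖) = fun x => 1 / 2 * Real.log (‖id x - v‖ ^ 2) := by
    funext x
    simp [Real.log_pow]
  rw [hfun]
  refine hsq.congr_fderiv ?_
  ext w
  simp
  ring

lemma contDiffOn_polyharmonicKernel {E : Type*} [NormedAddCommGroup E] [InnerProductSpace ℝ E]
    (c₁ c₂ p : ℝ) :
    ContDiffOn ℝ ∞ (fun x : E => ((c₁ * ‖x‖ ^ p + c₂ * ‖x‖ ^ p * Real.log ‖x‖ : ℝ) : ℂ))
      {x | x ≠ 0} := by
  intro x hx
  have hnorm : ContDiffAt ℝ ∞ (fun w : E => ‖w‖) x := contDiffAt_norm ℝ hx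
  have hx' : ‖x‖ ≠ 0 := norm_ne_zero_iff.mpr hx
  have hpow := hnorm.rpow_const_of_ne (p := p) hx'
  exact (Complex.ofRealCLM.contDiff.contDiffAt.comp x ((contDiffAt_const.mul hpow).add
    ((contDiffAt_const.mul hpow).mul (hnorm.log hx')))).contDiffWithinAt

theorem rel_foldr_comp_iterate {ι α β : Type*} (r : α → β → Prop) {F : ι → α → α}
    {G : ι → β → β} (hFG : ∀ i a b, r a b → r (F i a) (G i b)) (n : ι → ℕ) (l : List ι)
    {a : α} {b : β} (hab : r a b) :
    r ((l.map fun i => (F i)^[n i]).foldr (· ∘ ·) id a)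
      ((l.map fun i => (G i)^[n i]).foldr (· ∘ ·) id b) := by
  induction l with
  | nil => exact hab
  | cons i l ih =>
    simp only [List.map_cons, List.foldr_cons, Function.comp_apply]
    generalize (n i) = k
    induction k with
    | zero => exact ih
    | succ k ihk =>
      rw [Function.iterate_succ_apply', Function.iterate_succ_apply']
      exact hFG i _ _ ihk

theorem ContinuousMultilinearMap.map_const_eq_sum_single {ι F : Type*} [Fintype ι] [DecidableEq ι]
    [AddCommGroup F] [Module ℝ F] [TopologicalSpace F] {k : ℕ}
    (T : ContinuousMultilinearMap ℝ (fun _ : Fin k => EuclideanSpace ℝ ι) F)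
    (x : EuclideanSpace ℝ ι) :
    T (fun _ => x)
      = ∑ m : Fin k → ι, (∏ j, x (m j)) • T (fun j => EuclideanSpace.single (m j) 1) := by
  have hx : x = ∑ i, x i • EuclideanSpace.single i (1 : ℝ) := by
    simpa using ((EuclideanSpace.basisFun ι ℝ).sum_repr x).symm
  conv_lhs => rw [hx]
  rw [T.map_sum]
  exact Finset.sum_congr rfl fun m _ => T.map_smul_univ _ _

lemma cexp_log_mul_neg_two {r : ℝ} (hr : 0 < r) :
    Complex.exp (Real.log r * (-2)) = ((r ^ 2)⁻¹ : ℝ) := by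
  rw [show (Real.log r : ℂ) * (-2) = ((-2 * Real.log r : ℝ) : ℂ) by push_cast; ring,
    ← Complex.ofReal_exp, show -2 * Real.log r = Real.log ((r ^ 2)⁻¹) by
      rw [Real.log_inv, Real.log_pow]; push_cast; ring, Real.exp_log (by positivity)]

/-- Expressions in a variable `z ∈ ℝ^d`: `affine u v` stands for `⟨u, z - v⟩`, `normPow w v` for
`|z - v|^w` and `logNorm v` for `log |z - v|`. -/
inductive GrowthExpr (d : ℕ) : Type where
  | const : ℂ → GrowthExpr d
  | affine : Eu d → Eu d → GrowthExpr d
  | normPow : ℂ → Eu d → GrowthExpr d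
  | logNorm : Eu d → GrowthExpr d
  | add : GrowthExpr d → GrowthExpr d → GrowthExpr d
  | mul : GrowthExpr d → GrowthExpr d → GrowthExpr d

namespace GrowthExpr

def eval : GrowthExpr d → Eu d → ℂ
  | const c, _ => c
  | affine u v, z => (⟪u, z - v⟫ : ℂ)
  | normPow w v, z => Complex.exp (Real.log ‖z - v‖ * w)
  | logNorm v, z => (Real.log ‖z - v‖ : ℂ)
  | add e₁ e₂, z => e₁.eval z + e₂.eval z
  | mul e₁ e₂, z => e₁.eval z * e₂.eval z

/- `‖e.eval z‖ ≤ e.bound * ‖z‖ ^ e.order` as soon as `e.radius < ‖z‖` (`norm_eval_le`). -/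

def order : GrowthExpr d → ℝ
  | const _ => 0
  | affine _ _ => 1
  | normPow w _ => w.re
  | logNorm _ => 1
  | add e₁ e₂ => max e₁.order e₂.order
  | mul e₁ e₂ => e₁.order + e₂.order

def radius : GrowthExpr d → ℝ
  | const _ => 2
  | affine _ v | normPow _ v | logNorm v => 2 * ‖v‖ + 2
  | add e₁ e₂ | mul e₁ e₂ => max e₁.radius e₂.radius

def bound : GrowthExpr d → ℝ
  | const c => ‖c‖
  | affine u _ => 2 * ‖u‖
  | normPow w _ => 2 ^ |w.re|
  | logNorm _ => 2
  | add e₁ e₂ => e₁.bound + e₂.bound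
  | mul e₁ e₂ => e₁.bound * e₂.bound

/-- The derivative of a constant is written as a zero of order `-1`, so that `pderiv` lowers the
order by one in every case. -/
def pderiv (i : Fin d) : GrowthExpr d → GrowthExpr d
  | const _ => mul (const 0) (normPow (-1) 0)
  | affine u _ => const (⟪u, EuclideanSpace.single i 1⟫ : ℂ)
  | normPow w v => mul (mul (const w) (normPow (w - 2) v)) (affine (EuclideanSpace.single i 1) v)
  | logNorm v => mul (normPow (-2) v) (affine (EuclideanSpace.single i 1) v)
  | add e₁ e₂ => add (e₁.pderiv i) (e₂.pderiv i)
  | mul e₁ e₂ => add (mul (e₁.pderiv i) e₂) (mul e₁ (e₂.pderiv i))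

lemma bound_nonneg (e : GrowthExpr d) : 0 ≤ e.bound := by
  induction e with
  | add _ _ h₁ h₂ => exact add_nonneg h₁ h₂
  | mul _ _ h₁ h₂ => exact mul_nonneg h₁ h₂
  | _ => simp only [bound]; positivity

lemma two_le_radius (e : GrowthExpr d) : 2 ≤ e.radius := by
  induction e with
  | const => exact le_rfl
  | add _ _ h₁ _ | mul _ _ h₁ _ => exact h₁.trans (le_max_left _ _)
  | _ => simp only [radius]; linarith [norm_nonneg ‹Eu d›]

lemma radius_pderiv_le (i : Fin d) (e : GrowthExpr d) : (e.pderiv i).radius ≤ e.radius := by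
  induction e with
  | add _ _ h₁ h₂ => exact max_le_max h₁ h₂
  | mul _ _ h₁ h₂ => exact max_le (max_le_max h₁ le_rfl) (max_le_max le_rfl h₂)
  | _ => simp [pderiv, radius]

lemma order_pderiv_le (i : Fin d) (e : GrowthExpr d) : (e.pderiv i).order ≤ e.order - 1 := by
  induction e with
  | add _ _ h₁ h₂ =>
    exact max_le (h₁.trans (by simp [order])) (h₂.trans (by simp [order]))
  | mul _ _ h₁ h₂ => simp only [pderiv, order, max_le_iff]; constructor <;> linarith
  | _ => simp [pderiv, order] <;> linarith

lemma norm_eval_le (e : GrowthExpr d) {z : Eu d} (hz : e.radius < ‖z‖) :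
    ‖e.eval z‖ ≤ e.bound * ‖z‖ ^ e.order := by
  induction e with
  | const c => simp [eval, bound, order]
  | affine u v =>
    obtain ⟨-, h₂, -⟩ := norm_sub_bounds hz
    simp only [eval, bound, order, Complex.norm_real, Real.rpow_one, Real.norm_eq_abs]
    calc |⟪u, z - v⟫| ≤ ‖u‖ * ‖z - v‖ := abs_real_inner_le_norm u (z - v)
      _ ≤ ‖u‖ * (2 * ‖z‖) := by gcongr
      _ = 2 * ‖u‖ * ‖z‖ := by ring
  | normPow w v =>
    obtain ⟨h₁, h₂, h₃⟩ := norm_sub_bounds hz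
    rw [eval, Complex.norm_exp, Complex.re_ofReal_mul, ← Real.rpow_def_of_pos (by linarith)]
    exact rpow_le_two_rpow_abs_mul_rpow (by linarith [two_le_radius (normPow w v)]) h₁ h₂
  | logNorm v =>
    obtain ⟨-, h₂, h₃⟩ := norm_sub_bounds hz
    simp only [eval, bound, order, Complex.norm_real, Real.rpow_one, Real.norm_eq_abs]
    rw [abs_of_nonneg (Real.log_nonneg h₃.le)]
    linarith [Real.log_le_sub_one_of_pos (by linarith : (0 : ℝ) < ‖z - v‖)]
  | add e₁ e₂ h₁ h₂ =>
    simp only [radius, max_lt_iff] at hz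
    have hz1 : 1 ≤ ‖z‖ := by linarith [two_le_radius e₁]
    calc ‖e₁.eval z + e₂.eval z‖ ≤ e₁.bound * ‖z‖ ^ e₁.order + e₂.bound * ‖z‖ ^ e₂.order :=
          (norm_add_le _ _).trans (add_le_add (h₁ hz.1) (h₂ hz.2))
      _ ≤ e₁.bound * ‖z‖ ^ (add e₁ e₂).order + e₂.bound * ‖z‖ ^ (add e₁ e₂).order := by
          gcongr ?_ * ?_ + ?_ * ?_
          · exact bound_nonneg e₁
          · exact Real.rpow_le_rpow_of_exponent_le hz1 (le_max_left _ _)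
          · exact bound_nonneg e₂
          · exact Real.rpow_le_rpow_of_exponent_le hz1 (le_max_right _ _)
      _ = (add e₁ e₂).bound * ‖z‖ ^ (add e₁ e₂).order := by rw [bound]; ring
  | mul e₁ e₂ h₁ h₂ =>
    simp only [radius, max_lt_iff] at hz
    have hz0 : 0 < ‖z‖ := by linarith [two_le_radius e₁]
    calc ‖e₁.eval z * e₂.eval z‖ ≤ (e₁.bound * ‖z‖ ^ e₁.order) * (e₂.bound * ‖z‖ ^ e₂.order) := by
          rw [norm_mul]
          exact mul_le_mul (h₁ hz.1) (h₂ hz.2) (norm_nonneg _)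
            (mul_nonneg (bound_nonneg e₁) (by positivity))
      _ = (mul e₁ e₂).bound * ‖z‖ ^ (mul e₁ e₂).order := by
          rw [bound, order, Real.rpow_add hz0]; ring

lemma hasFDerivAt_eval_logNorm {v z : Eu d} (h : z ≠ v) :
    HasFDerivAt (logNorm v).eval
      (Complex.ofRealCLM.comp ((‖z - v‖ ^ 2)⁻¹ • innerSL ℝ (z - v))) z :=
  Complex.ofRealCLM.hasFDerivAt.comp z (hasFDerivAt_log_norm_sub h)

lemma exists_hasFDerivAt_eval (e : GrowthExpr d) {z : Eu d} (hz : e.radius < ‖z‖) :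
    ∃ L : Eu d →L[ℝ] ℂ, HasFDerivAt e.eval L z ∧
      ∀ i, L (EuclideanSpace.single i 1) = (e.pderiv i).eval z := by
  induction e with
  | const c => exact ⟨0, hasFDerivAt_const c z, fun i => by simp [pderiv, eval]⟩
  | affine u v =>
    refine ⟨_, Complex.ofRealCLM.hasFDerivAt.comp z
      ((innerSL ℝ u).hasFDerivAt.comp z ((hasFDerivAt_id z).sub_const v)), fun i => ?_⟩
    simp [pderiv, eval]
  | normPow w v =>
    obtain ⟨-, -, h₃⟩ := norm_sub_bounds hz
    have hzv : z ≠ v := sub_ne_zero.mp (norm_pos_iff.mp (by linarith))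
    refine ⟨_, ((hasFDerivAt_eval_logNorm hzv).mul_const w).cexp, fun i => ?_⟩
    have hpow : Complex.exp (Real.log ‖z - v‖ * (w - 2))
        = Complex.exp (Real.log ‖z - v‖ * w) * ((‖z - v‖ ^ 2)⁻¹ : ℝ) := by
      rw [← cexp_log_mul_neg_two (by linarith), ← Complex.exp_add]; ring_nf
    simp only [pderiv, eval, hpow, smul_apply, ContinuousLinearMap.comp_apply,
      coe_innerSL_apply, Complex.ofRealCLM_apply, smul_eq_mul, real_inner_comm]
    push_cast
    ring
  | logNorm v =>
    obtain ⟨-, -, h₃⟩ := norm_sub_bounds hz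
    have hzv : z ≠ v := sub_ne_zero.mp (norm_pos_iff.mp (by linarith))
    refine ⟨_, hasFDerivAt_eval_logNorm hzv, fun i => ?_⟩
    simp only [pderiv, eval, smul_apply, ContinuousLinearMap.comp_apply,
      coe_innerSL_apply, Complex.ofRealCLM_apply, smul_eq_mul, real_inner_comm,
      cexp_log_mul_neg_two (show 0 < ‖z - v‖ by linarith)]
    push_cast
    ring
  | add e₁ e₂ h₁ h₂ =>
    simp only [radius, max_lt_iff] at hz
    obtain ⟨L₁, hL₁, hL₁i⟩ := h₁ hz.1
    obtain ⟨L₂, hL₂, hL₂i⟩ := h₂ hz.2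
    exact ⟨L₁ + L₂, hL₁.add hL₂, fun i => by simp [pderiv, eval, hL₁i, hL₂i]⟩
  | mul e₁ e₂ h₁ h₂ =>
    simp only [radius, max_lt_iff] at hz
    obtain ⟨L₁, hL₁, hL₁i⟩ := h₁ hz.1
    obtain ⟨L₂, hL₂, hL₂i⟩ := h₂ hz.2
    exact ⟨_, hL₁.mul hL₂, fun i => by simp [pderiv, eval, hL₁i, hL₂i]; ring⟩

/-- `Dominated e e'`: `e'` has the shape of `e`, with parameters of larger norm. -/
inductive Dominated : GrowthExpr d → GrowthExpr d → Prop where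
  | const {c c' : ℂ} : ‖c‖ ≤ ‖c'‖ → Dominated (const c) (const c')
  | affine {u v v' : Eu d} : ‖v‖ ≤ ‖v'‖ → Dominated (affine u v) (affine u v')
  | normPow {w : ℂ} {v v' : Eu d} : ‖v‖ ≤ ‖v'‖ → Dominated (normPow w v) (normPow w v')
  | logNorm {v v' : Eu d} : ‖v‖ ≤ ‖v'‖ → Dominated (logNorm v) (logNorm v')
  | add {e₁ e₂ e₁' e₂' : GrowthExpr d} :
      Dominated e₁ e₁' → Dominated e₂ e₂' → Dominated (add e₁ e₂) (add e₁' e₂')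
  | mul {e₁ e₂ e₁' e₂' : GrowthExpr d} :
      Dominated e₁ e₁' → Dominated e₂ e₂' → Dominated (mul e₁ e₂) (mul e₁' e₂')

namespace Dominated

lemma refl (e : GrowthExpr d) : Dominated e e := by
  induction e with
  | const => exact const le_rfl
  | affine => exact affine le_rfl
  | normPow => exact normPow le_rfl
  | logNorm => exact logNorm le_rfl
  | add _ _ h₁ h₂ => exact add h₁ h₂
  | mul _ _ h₁ h₂ => exact mul h₁ h₂

lemma bound_le {e e' : GrowthExpr d} (h : Dominated e e') : e.bound ≤ e'.bound := by
  induction h with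
  | const h => exact h
  | add _ _ h₁ h₂ => exact add_le_add h₁ h₂
  | @mul e₁ e₂ _ _ _ _ h₁ h₂ =>
    exact mul_le_mul h₁ h₂ (bound_nonneg e₂) ((bound_nonneg e₁).trans h₁)
  | _ => exact le_rfl

lemma pderiv {e e' : GrowthExpr d} (i : Fin d) (h : Dominated e e') :
    Dominated (e.pderiv i) (e'.pderiv i) := by
  induction h with
  | const _ | affine _ => exact refl _
  | normPow h => exact mul (mul (refl _) (normPow h)) (affine h)
  | logNorm h => exact mul (normPow h) (affine h)
  | add _ _ h₁ h₂ => exact add h₁ h₂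
  | mul hd₁ hd₂ h₁ h₂ => exact add (mul h₁ hd₂) (mul hd₁ h₂)

end Dominated

def mderiv (α : Fin d → ℕ) (e : GrowthExpr d) : GrowthExpr d :=
  ((List.ofFn fun i : Fin d => (pderiv i)^[α i]).foldr (· ∘ ·) id) e

lemma Dominated.mderiv {e e' : GrowthExpr d} (α : Fin d → ℕ) (h : Dominated e e') :
    Dominated (e.mderiv α) (e'.mderiv α) := by
  simp only [GrowthExpr.mderiv, List.ofFn_eq_map]
  exact rel_foldr_comp_iterate Dominated (fun i _ _ => Dominated.pderiv i) α _ h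

lemma order_mderiv_le (α : Fin d → ℕ) (e : GrowthExpr d) :
    (e.mderiv α).order ≤ e.order - mdeg α := by
  have key : ∀ l : List (Fin d), ((l.map fun i => (pderiv i)^[α i]).foldr (· ∘ ·) id e).order
      ≤ e.order - ((l.map α).sum : ℕ) := by
    intro l
    induction l with
    | nil => simp
    | cons i l ih =>
      simp only [List.map_cons, List.foldr_cons, Function.comp_apply, List.sum_cons]
      generalize ((l.map fun i => (pderiv i)^[α i]).foldr (· ∘ ·) id e) = e' at ih
      induction α i with
      | zero => simpa using ih
      | succ k ihk =>
        rw [Function.iterate_succ_apply']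
        push_cast at ihk ⊢
        linarith [order_pderiv_le i ((pderiv i)^[k] e')]
  have h := key (List.finRange d)
  simp only [← List.ofFn_eq_map, List.sum_ofFn] at h
  exact h

end GrowthExpr

open GrowthExpr

def AgreesOutside (R : ℝ) (f : Eu d → ℂ) (e : GrowthExpr d) : Prop :=
  e.radius ≤ R ∧ ∀ z : Eu d, R < ‖z‖ → f z = e.eval z

namespace AgreesOutside

lemma pderiv1 {R : ℝ} {f : Eu d → ℂ} {e : GrowthExpr d} (i : Fin d) (h : AgreesOutside R f e) :
    AgreesOutside R (_root_.pderiv1 i f) (e.pderiv i) := by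
  refine ⟨(radius_pderiv_le i e).trans h.1, fun z hz => ?_⟩
  have hfe : f =ᶠ[𝓝 z] e.eval := Filter.eventuallyEq_of_mem
    ((isOpen_lt continuous_const continuous_norm).mem_nhds hz) h.2
  obtain ⟨L, hL, hLi⟩ := e.exists_hasFDerivAt_eval (h.1.trans_lt hz)
  rw [_root_.pderiv1, hfe.fderiv_eq, hL.fderiv, hLi]

lemma mderiv {R : ℝ} {f : Eu d → ℂ} {e : GrowthExpr d} (α : Fin d → ℕ)
    (h : AgreesOutside R f e) : AgreesOutside R (_root_.mderiv α f) (e.mderiv α) := by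
  simp only [_root_.mderiv, GrowthExpr.mderiv, List.ofFn_eq_map]
  exact rel_foldr_comp_iterate (AgreesOutside R) (fun i _ _ => pderiv1 i) α _ h

theorem norm_mderiv_le {R s : ℝ} {f : Eu d → ℂ} {e e' : GrowthExpr d}
    (hf : AgreesOutside R f e) (hdom : Dominated e e') (hs : e.order ≤ s) (α : Fin d → ℕ)
    {z : Eu d} (hz : R < ‖z‖) :
    ‖_root_.mderiv α f z‖ ≤ (e'.mderiv α).bound * ‖z‖ ^ (s - mdeg α) := by
  obtain ⟨hR, hfα⟩ := hf.mderiv α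
  have hz1 : 1 ≤ ‖z‖ := by linarith [two_le_radius (e.mderiv α)]
  rw [hfα z hz]
  calc _ ≤ (e.mderiv α).bound * ‖z‖ ^ (e.mderiv α).order := norm_eval_le _ (hR.trans_lt hz)
    _ ≤ (e'.mderiv α).bound * ‖z‖ ^ (s - mdeg α) := by
      gcongr
      · exact bound_nonneg _
      · exact (hdom.mderiv α).bound_le
      · linarith [order_mderiv_le α e]

end AgreesOutside

namespace GrowthExpr

def listSum : List (GrowthExpr d) → GrowthExpr d
  | [] => const 0
  | e :: l => add e (listSum l)

def listProd : List (GrowthExpr d) → GrowthExpr d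
  | [] => const 1
  | e :: l => mul e (listProd l)

section FinsetSum

variable {ι : Type*}

def finsetSum (s : Finset ι) (f : ι → GrowthExpr d) : GrowthExpr d := listSum (s.toList.map f)

def finsetProd (s : Finset ι) (f : ι → GrowthExpr d) : GrowthExpr d := listProd (s.toList.map f)

lemma eval_finsetSum (s : Finset ι) (f : ι → GrowthExpr d) (z : Eu d) :
    (finsetSum s f).eval z = ∑ i ∈ s, (f i).eval z := by
  rw [finsetSum, ← Finset.sum_map_toList]
  induction s.toList with
  | nil => rfl
  | cons i l ih => simp [listSum, eval, ih]

lemma eval_finsetProd (s : Finset ι) (f : ι → GrowthExpr d) (z : Eu d) :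
    (finsetProd s f).eval z = ∏ i ∈ s, (f i).eval z := by
  rw [finsetProd, ← Finset.prod_map_toList]
  induction s.toList with
  | nil => rfl
  | cons i l ih => simp [listProd, eval, ih]

lemma radius_finsetSum_le {R : ℝ} (hR : 2 ≤ R) {s : Finset ι} {f : ι → GrowthExpr d}
    (h : ∀ i ∈ s, (f i).radius ≤ R) : (finsetSum s f).radius ≤ R := by
  rw [finsetSum]
  simp only [← Finset.mem_toList] at h
  generalize s.toList = l at h ⊢
  induction l with
  | nil => exact hR
  | cons i l ih => exact max_le (h i (by simp)) (ih fun j hj => h j (by simp [hj]))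

lemma radius_finsetProd_le {R : ℝ} (hR : 2 ≤ R) {s : Finset ι} {f : ι → GrowthExpr d}
    (h : ∀ i ∈ s, (f i).radius ≤ R) : (finsetProd s f).radius ≤ R := by
  rw [finsetProd]
  simp only [← Finset.mem_toList] at h
  generalize s.toList = l at h ⊢
  induction l with
  | nil => exact hR
  | cons i l ih => exact max_le (h i (by simp)) (ih fun j hj => h j (by simp [hj]))

lemma order_finsetSum_le {t : ℝ} (ht : 0 ≤ t) {s : Finset ι} {f : ι → GrowthExpr d}
    (h : ∀ i ∈ s, (f i).order ≤ t) : (finsetSum s f).order ≤ t := by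
  rw [finsetSum]
  simp only [← Finset.mem_toList] at h
  generalize s.toList = l at h ⊢
  induction l with
  | nil => exact ht
  | cons i l ih => exact max_le (h i (by simp)) (ih fun j hj => h j (by simp [hj]))

lemma order_finsetProd (s : Finset ι) (f : ι → GrowthExpr d) :
    (finsetProd s f).order = ∑ i ∈ s, (f i).order := by
  rw [finsetProd, ← Finset.sum_map_toList]
  induction s.toList with
  | nil => simp [listProd, order]
  | cons i l ih => simp [listProd, order, ih]

lemma Dominated.finsetSum {s : Finset ι} {f g : ι → GrowthExpr d}
    (h : ∀ i ∈ s, Dominated (f i) (g i)) : Dominated (finsetSum s f) (finsetSum s g) := by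
  rw [GrowthExpr.finsetSum, GrowthExpr.finsetSum]
  simp only [← Finset.mem_toList] at h
  generalize s.toList = l at h ⊢
  induction l with
  | nil => exact Dominated.refl _
  | cons i l ih => exact Dominated.add (h i (by simp)) (ih fun j hj => h j (by simp [hj]))

end FinsetSum

def monomial (k : ℕ) (m : Fin k → Fin d) : GrowthExpr d :=
  finsetProd Finset.univ fun j => affine (-EuclideanSpace.single (m j) 1) 0

lemma eval_monomial (k : ℕ) (m : Fin k → Fin d) (z : Eu d) :
    (monomial k m).eval z = ∏ j, ((-z) (m j) : ℂ) := by
  simp [monomial, eval_finsetProd, eval, EuclideanSpace.inner_single_left]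

lemma order_monomial (k : ℕ) (m : Fin k → Fin d) : (monomial k m).order = k := by
  simp [monomial, order_finsetProd, order]

lemma radius_monomial_le (k : ℕ) (m : Fin k → Fin d) : (monomial k m).radius ≤ 2 :=
  radius_finsetProd_le le_rfl fun j _ => by simp [radius]

def taylorPoly (cf : (k : ℕ) → (Fin k → Fin d) → ℂ) (n : ℕ) : GrowthExpr d :=
  finsetSum (Finset.range n) fun k =>
    finsetSum Finset.univ fun m => mul (const (cf k m)) (monomial k m)

def taylorCoeff (T : (k : ℕ) → ContinuousMultilinearMap ℝ (fun _ : Fin k => Eu d) ℂ)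
    (k : ℕ) (m : Fin k → Fin d) : ℂ :=
  (k.factorial : ℂ)⁻¹ * T k (fun j => EuclideanSpace.single (m j) 1)

lemma continuousOn_taylorCoeff {f : Eu d → ℂ} {U : Set (Eu d)}
    (hf : ContDiffOn ℝ ∞ f U) (hU : IsOpen U) (k : ℕ) (m : Fin k → Fin d) :
    ContinuousOn (fun y => taylorCoeff (fun k => iteratedFDeriv ℝ k f y) k m) U :=
  continuousOn_const.mul <| (continuous_eval_const _).comp_continuousOn
    (ContinuousOn.continuousOn_iteratedFDeriv hf hU (by exact_mod_cast le_top))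

lemma eval_taylorPoly (T : (k : ℕ) → ContinuousMultilinearMap ℝ (fun _ : Fin k => Eu d) ℂ)
    (n : ℕ) (z : Eu d) :
    (taylorPoly (taylorCoeff T) n).eval z
      = ∑ k ∈ Finset.range n, (k.factorial : ℂ)⁻¹ • T k (fun _ => -z) := by
  simp only [taylorPoly, eval_finsetSum, eval, eval_monomial, taylorCoeff,
    (T _).map_const_eq_sum_single, Complex.real_smul, Complex.ofReal_prod,
    smul_eq_mul]
  refine Finset.sum_congr rfl fun k _ => ?_
  rw [Finset.mul_sum]
  exact Finset.sum_congr rfl fun m _ => by ring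

def polyharmonicKernel (c₁ c₂ p : ℝ) (v : Eu d) : GrowthExpr d :=
  add (mul (const c₁) (normPow p v)) (mul (const c₂) (mul (normPow p v) (logNorm v)))

lemma eval_polyharmonicKernel (c₁ c₂ p : ℝ) {v z : Eu d} (hzv : z ≠ v) :
    (polyharmonicKernel c₁ c₂ p v).eval z
      = ((c₁ * ‖v - z‖ ^ p + c₂ * ‖v - z‖ ^ p * Real.log ‖v - z‖ : ℝ) : ℂ) := by
  have hpow : Complex.exp (Real.log ‖z - v‖ * p) = ((‖z - v‖ ^ p : ℝ) : ℂ) := by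
    rw [Real.rpow_def_of_pos (norm_pos_iff.mpr (sub_ne_zero.mpr hzv)), Complex.ofReal_exp]
    push_cast; rfl
  simp only [polyharmonicKernel, eval, hpow, norm_sub_rev v z]
  push_cast
  ring

def bernoulliSymbol (ν : ℂ) (c₁ c₂ p : ℝ) (v : Eu d) (cf : (k : ℕ) → (Fin k → Fin d) → ℂ) (n : ℕ) :
    GrowthExpr d :=
  mul (normPow (-ν) 0) (add (polyharmonicKernel c₁ c₂ p v) (mul (const (-1)) (taylorPoly cf n)))

lemma radius_bernoulliSymbol_le (ν : ℂ) (c₁ c₂ p : ℝ) (v : Eu d)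
    (cf : (k : ℕ) → (Fin k → Fin d) → ℂ) (n : ℕ) :
    (bernoulliSymbol ν c₁ c₂ p v cf n).radius ≤ 2 * ‖v‖ + 2 := by
  have h2 : (2 : ℝ) ≤ 2 * ‖v‖ + 2 := by linarith [norm_nonneg v]
  have hpoly : (taylorPoly cf n).radius ≤ 2 * ‖v‖ + 2 :=
    radius_finsetSum_le h2 fun k _ => radius_finsetSum_le h2 fun m _ =>
      max_le h2 ((radius_monomial_le k m).trans h2)
  simp only [bernoulliSymbol, polyharmonicKernel, radius, norm_zero, max_le_iff]
  refine ⟨by linarith, ⟨⟨h2, le_rfl⟩, h2, le_rfl, le_rfl⟩, h2, hpoly⟩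

lemma order_bernoulliSymbol_le (ν : ℂ) (c₁ c₂ p : ℝ) (v : Eu d)
    (cf : (k : ℕ) → (Fin k → Fin d) → ℂ) (n : ℕ) {t : ℝ} (ht : 0 ≤ t) (hp : p + 1 ≤ t)
    (hn : (n : ℝ) ≤ t + 1) :
    (bernoulliSymbol ν c₁ c₂ p v cf n).order ≤ t - ν.re := by
  have hpoly : (taylorPoly cf n).order ≤ t :=
    order_finsetSum_le ht fun k hk => order_finsetSum_le ht fun m _ => by
      have : (k : ℝ) + 1 ≤ n := by exact_mod_cast Finset.mem_range.mp hk
      simp only [order, order_monomial]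
      linarith
  simp only [bernoulliSymbol, polyharmonicKernel, order, Complex.neg_re, Complex.ofReal_re]
  have := max_le (max_le (by linarith : 0 + p ≤ t) (by linarith : 0 + (p + 1) ≤ t))
    (by linarith : 0 + (taylorPoly cf n).order ≤ t)
  linarith

lemma Dominated.bernoulliSymbol {ν : ℂ} {c₁ c₂ p : ℝ} {v v' : Eu d}
    {cf cf' : (k : ℕ) → (Fin k → Fin d) → ℂ} {n : ℕ}
    (hv : ‖v‖ ≤ ‖v'‖) (hcf : ∀ k m, ‖cf k m‖ ≤ ‖cf' k m‖) :
    Dominated (bernoulliSymbol ν c₁ c₂ p v cf n) (bernoulliSymbol ν c₁ c₂ p v' cf' n) :=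
  .mul (.refl _) <| .add
    (.add (.mul (.refl _) (.normPow hv)) (.mul (.refl _) (.mul (.normPow hv) (.logNorm hv))))
    (.mul (.refl _) <| .finsetSum fun k _ => .finsetSum fun m _ =>
      .mul (.const (hcf k m)) (.refl _))

lemma agreesOutside_bernoulliSymbol (ν : ℂ) {c₁ c₂ p : ℝ} {φ : Eu d → ℝ}
    (hφ : ∀ x, x ≠ 0 → φ x = c₁ * ‖x‖ ^ p + c₂ * ‖x‖ ^ p * Real.log ‖x‖) {y : Eu d} {R : ℝ}
    (hR : 2 * ‖y‖ + 2 ≤ R)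
    (T : (k : ℕ) → ContinuousMultilinearMap ℝ (fun _ : Fin k => Eu d) ℂ) (n : ℕ) :
    AgreesOutside R
      (fun z => (‖z‖ : ℂ) ^ (-ν) *
        ((φ (y - z) : ℂ) - ∑ k ∈ Finset.range n, (k.factorial : ℂ)⁻¹ • T k (fun _ => -z)))
      (bernoulliSymbol ν c₁ c₂ p y (taylorCoeff T) n) := by
  refine ⟨(radius_bernoulliSymbol_le _ _ _ _ _ _ _).trans hR, fun z hz => ?_⟩
  obtain ⟨-, -, hzy₁⟩ := norm_sub_bounds (hz.trans_le' hR)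
  have hzy : z ≠ y := sub_ne_zero.mp (norm_pos_iff.mp (by linarith))
  have hz0 : (‖z‖ : ℂ) ≠ 0 := by
    exact_mod_cast (by linarith [norm_nonneg y] : ‖z‖ ≠ 0)
  dsimp only
  rw [bernoulliSymbol, eval, eval, eval, eval, eval_polyharmonicKernel _ _ _ hzy,
    eval_taylorPoly, eval, sub_zero,
    Complex.cpow_def_of_ne_zero hz0, Complex.ofReal_log (norm_nonneg z),
    hφ _ (sub_ne_zero.mpr hzy.symm)]
  ring

end GrowthExpr

/-- Decay estimates for the `z`-derivatives of the Bernoulli symbol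
`a_ν^{(ℓ)}(y,z)`, uniformly for `y` in a compact set away from the origin. -/
theorem statement14 {d : ℕ} (ℓ : ℕ) (ν : ℂ) (c₁ c₂ : ℝ) (φ : Eu d → ℝ)
    (hφ : φ = fun x => c₁ * ‖x‖ ^ ((2*(ℓ+1) : ℝ) - d)
      + c₂ * ‖x‖ ^ ((2*(ℓ+1) : ℝ) - d) * Real.log ‖x‖)
    (a : Eu d → Eu d → ℂ)
    (ha : a = fun y z => (‖z‖ : ℂ) ^ (-ν) *
      (((φ (y - z) : ℝ) : ℂ) - ∑ k ∈ Finset.range (2*ℓ+2),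
        ((k.factorial : ℂ))⁻¹
          • iteratedFDeriv ℝ k (fun w => ((φ w : ℝ) : ℂ)) y (fun _ => -z)))
    (α : Fin d → ℕ) (K : Set (Eu d)) (hK : IsCompact K) (hK0 : K ⊆ {x : Eu d | x ≠ 0}) :
    ∃ R C : ℝ, 0 < R ∧ 0 < C ∧ ∀ y ∈ K, ∀ z : Eu d, R < ‖z‖ →
      ‖mderiv α (a y) z‖ ≤ C * ‖z‖ ^ ((2*(ℓ+1) : ℝ) - ν.re - (mdeg α : ℝ)) := by
  rcases K.eq_empty_or_nonempty with rfl | hKne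
  · exact ⟨1, 1, one_pos, one_pos, by simp⟩
  obtain ⟨y₀, hy₀, hy₀max⟩ := hK.exists_isMaxOn hKne continuous_norm.continuousOn
  have hd : (1 : ℝ) ≤ d := by
    have : d ≠ 0 := by rintro rfl; exact hK0 hy₀ (Subsingleton.elim _ _)
    exact_mod_cast Nat.one_le_iff_ne_zero.mpr this
  have hφC : ContDiffOn ℝ ∞ (fun w => ((φ w : ℝ) : ℂ)) {x | x ≠ 0} := by
    rw [hφ]; exact contDiffOn_polyharmonicKernel c₁ c₂ _
  let T y k := iteratedFDeriv ℝ k (fun w => ((φ w : ℝ) : ℂ)) y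
  let E y := bernoulliSymbol ν c₁ c₂ ((2*(ℓ+1) : ℝ) - d) y (taylorCoeff (T y)) (2*ℓ+2)
  choose M hM using fun k (m : Fin k → Fin d) =>
    hK.exists_bound_of_continuousOn ((continuousOn_taylorCoeff hφC isOpen_ne k m).mono hK0)
  let Emaj := bernoulliSymbol ν c₁ c₂ ((2*(ℓ+1) : ℝ) - d) y₀ (fun k m => (M k m : ℂ)) (2*ℓ+2)
  refine ⟨2 * ‖y₀‖ + 2, (Emaj.mderiv α).bound + 1, by positivity,
    by linarith [bound_nonneg (Emaj.mderiv α)], fun y hy z hz => ?_⟩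
  have hyy₀ : ‖y‖ ≤ ‖y₀‖ := hy₀max hy
  have hagree : AgreesOutside (2 * ‖y₀‖ + 2) (a y) (E y) := by
    rw [ha]
    exact agreesOutside_bernoulliSymbol ν (fun x _ => congrFun hφ x) (by linarith) (T y) _
  have hdom : Dominated (E y) Emaj :=
    .bernoulliSymbol hyy₀ fun k m => by simpa using (hM k m y hy).trans (le_abs_self _)
  have hord : (E y).order ≤ 2 * (ℓ + 1) - ν.re :=
    order_bernoulliSymbol_le _ _ _ _ _ _ _ (by positivity) (by linarith) (by push_cast; linarith)
  calc ‖mderiv α (a y) z‖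
      ≤ (Emaj.mderiv α).bound * ‖z‖ ^ ((2*(ℓ+1) : ℝ) - ν.re - (mdeg α : ℝ)) :=
        hagree.norm_mderiv_le hdom hord α hz
    _ ≤ _ := by gcongr; linarith
end
end

section
/- For every integer m ≥ 1 and every ν ∈ ℂ with Re ν > 2, the two-dimensional lattice sums satisfy the solid-harmonic/Chebyshev identity Σ'_{z∈ℤ²} A_{2m}(z)/|z|^{ν+2m} = Σ_{k=0}^{m} ( T_{2m}^{(2k)}(0) / (2k)! ) · Σ'_{z∈ℤ²} z₁^{2k}/|z|^{ν+2k}, where A_{2m}(z) = Re((z₁ + i z₂)^{2m}) is the solid harmonic of degree 2m, T_{2m} is the Chebyshev polynomial of the first kind of degree 2m, T_{2m}^{(2k)}(0) its 2k-th derivative at 0, and all series converge absolutely. -/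
open MeasureTheory Filter Topology Metric Real
open scoped RealInnerProductSpace FourierTransform Pointwise Matrix ContDiff

noncomputable section

variable {d : ℕ}

/-! Writing `z₁ + i z₂ = |z| e^{iθ}`, the solid harmonic is
`A_{2m}(z) = |z|^{2m} cos (2mθ) = |z|^{2m} T_{2m}(z₁/|z|)`. Since `T_{2m}` is even of degree `2m`,
its Taylor expansion at `0` gives `A_{2m}(z) = Σ_k c_k z₁^{2k} |z|^{2m-2k}` with
`c_k = T_{2m}^{(2k)}(0)/(2k)!`, so the series splits termwise into `m + 1` series. Each term of
each series is bounded by `|z|^{-Re ν} ≤ ‖z‖_∞^{-Re ν}`, and the Eisenstein-series estimate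
makes that summable for `Re ν > 2`. -/

open Polynomial Polynomial.Chebyshev Finset

theorem Polynomial.iterate_derivative_eval_zero_div_factorial {K : Type*} [Field K] [CharZero K]
    (p : K[X]) (k : ℕ) : (derivative^[k] p).eval 0 / (k.factorial : K) = p.coeff k := by
  rw [← coeff_zero_eq_eval_zero, coeff_iterate_derivative, zero_add, Nat.descFactorial_self,
    nsmul_eq_mul, mul_div_cancel_left₀ _ (by exact_mod_cast k.factorial_ne_zero)]

theorem Polynomial.Chebyshev.coeff_T_eq_zero_of_odd_add (R : Type*) [CommRing R] (n : ℤ) {i : ℕ}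
    (h : Odd (n + i)) : (T R n).coeff i = 0 := by
  induction n using Chebyshev.induct' generalizing i with
  | zero => rw [T_zero, coeff_one, if_neg]; rintro rfl; simp at h
  | one => rw [T_one, coeff_X, if_neg]; rintro rfl; norm_num at h
  | add_two n ih1 ih2 =>
    rw [Int.odd_iff] at h
    rw [T_add_two, coeff_sub, ih2 (by rw [Int.odd_iff]; omega), sub_zero, mul_assoc,
      ← map_ofNat Polynomial.C 2, coeff_C_mul]
    cases i with
    | zero => simp
    | succ i => rw [coeff_X_mul, ih1 (by rw [Int.odd_iff]; push_cast at h; omega), mul_zero]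
  | neg n ih => rw [T_neg]; exact ih (by rw [Int.odd_iff] at h ⊢; omega)

theorem Finset.sum_range_two_mul {M : Type*} [AddCommMonoid M] (f : ℕ → M) (n : ℕ) :
    ∑ i ∈ range (2 * n), f i = ∑ k ∈ range n, (f (2 * k) + f (2 * k + 1)) := by
  induction n with
  | zero => simp
  | succ n ih => rw [Nat.mul_succ, sum_range_succ, sum_range_succ, sum_range_succ, ih, add_assoc]

theorem Polynomial.eval_eq_sum_range_even {R : Type*} [CommSemiring R] {p : R[X]} {m : ℕ}
    (hdeg : p.natDegree ≤ 2 * m) (hodd : ∀ i, Odd i → p.coeff i = 0) (x : R) :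
    p.eval x = ∑ k ∈ range (m + 1), p.coeff (2 * k) * x ^ (2 * k) := by
  rw [eval_eq_sum_range' (n := 2 * (m + 1)) (by omega), sum_range_two_mul]
  refine sum_congr rfl fun k _ => ?_
  rw [hodd _ (odd_two_mul_add_one k), zero_mul, add_zero]

theorem Polynomial.Chebyshev.T_two_mul_eval_eq_sum (R : Type*) [CommRing R] [IsDomain R]
    [NeZero (2 : R)] (m : ℕ) (x : R) :
    (T R (2 * m)).eval x = ∑ k ∈ range (m + 1), (T R (2 * m)).coeff (2 * k) * x ^ (2 * k) :=
  eval_eq_sum_range_even (by rw [natDegree_T]; omega) (fun i hi => coeff_T_eq_zero_of_odd_add R _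
    (by rw [Nat.odd_iff] at hi; rw [Int.odd_iff]; omega)) x

theorem Complex.re_pow_eq_norm_pow_mul_T_eval {w : ℂ} (hw : w ≠ 0) (n : ℕ) :
    (w ^ n).re = ‖w‖ ^ n * (T ℝ n).eval (w.re / ‖w‖) := by
  conv_lhs => rw [← Complex.norm_mul_exp_arg_mul_I w]
  rw [mul_pow, ← Complex.ofReal_pow, ← Complex.exp_nat_mul, Complex.re_ofReal_mul,
    show (n : ℂ) * (w.arg * Complex.I) = ((n * w.arg : ℝ) : ℂ) * Complex.I by push_cast; ring,
    Complex.exp_ofReal_mul_I_re, ← Complex.cos_arg hw, T_real_cos]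
  norm_cast

theorem Complex.cpow_neg_add_natCast {r : ℝ} (hr : 0 < r) (ν : ℂ) (n : ℕ) :
    (r : ℂ) ^ (-(ν + n)) = (r : ℂ) ^ (-ν) / (r : ℂ) ^ n := by
  rw [neg_add, Complex.cpow_add _ _ (by exact_mod_cast hr.ne'), Complex.cpow_neg _ (n : ℂ),
    Complex.cpow_natCast, div_eq_mul_inv]

theorem Complex.re_pow_two_mul_mul_cpow_eq_sum {w : ℂ} (hw : w ≠ 0) (m : ℕ) (ν : ℂ) :
    ((w ^ (2 * m)).re : ℂ) * (‖w‖ : ℂ) ^ (-(ν + (2 * m : ℕ))) =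
      ∑ k ∈ range (m + 1), ((T ℝ (2 * m)).coeff (2 * k) : ℂ) *
        ((w.re ^ (2 * k) : ℝ) * (‖w‖ : ℂ) ^ (-(ν + (2 * k : ℕ)))) := by
  have hr : 0 < ‖w‖ := norm_pos_iff.mpr hw
  have hr' : (‖w‖ : ℂ) ≠ 0 := by exact_mod_cast hr.ne'
  rw [Complex.re_pow_eq_norm_pow_mul_T_eval hw, Nat.cast_mul, Nat.cast_ofNat,
    T_two_mul_eval_eq_sum]
  simp only [Complex.cpow_neg_add_natCast hr]
  push_cast
  rw [Finset.mul_sum, Finset.sum_mul]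
  refine Finset.sum_congr rfl fun k _ => ?_
  rw [div_pow]
  field_simp

theorem lpt_one_apply {d : ℕ} (z : Fin d → ℤ) (i : Fin d) : lpt 1 z i = z i := by
  simp [lpt]

theorem abs_le_norm_lpt_one {d : ℕ} (z : Fin d → ℤ) (i : Fin d) : |(z i : ℝ)| ≤ ‖lpt 1 z‖ := by
  simpa [lpt_one_apply] using PiLp.norm_apply_le (lpt 1 z) i

theorem norm_le_norm_lpt_one {d : ℕ} (z : Fin d → ℤ) : ‖z‖ ≤ ‖lpt 1 z‖ :=
  (pi_norm_le_iff_of_nonneg (norm_nonneg _)).mpr fun i => by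
    simpa only [Int.norm_eq_abs, Int.cast_abs] using abs_le_norm_lpt_one z i

theorem norm_lpt_one_eq_norm_complex (z : Fin 2 → ℤ) :
    ‖lpt 1 z‖ = ‖((z 0 : ℂ) + Complex.I * (z 1 : ℂ))‖ := by
  rw [EuclideanSpace.norm_eq, Complex.norm_def, Complex.normSq_apply]
  simp [Fin.sum_univ_two, lpt_one_apply, sq]

theorem norm_ofReal_mul_cpow_le {t r : ℝ} (hr : 0 < r) (ν : ℂ) {n : ℕ} (ht : |t| ≤ r ^ n) :
    ‖(t : ℂ) * (r : ℂ) ^ (-(ν + n))‖ ≤ r ^ (-ν.re) := by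
  rw [Complex.cpow_neg_add_natCast hr, norm_mul, norm_div, norm_pow, Complex.norm_real,
    Complex.norm_real, Complex.norm_cpow_eq_rpow_re_of_pos hr, Complex.neg_re, Real.norm_eq_abs,
    Real.norm_of_nonneg hr.le, mul_div_assoc', div_le_iff₀ (by positivity), mul_comm]
  exact mul_le_mul_of_nonneg_left ht (by positivity)

theorem summable_norm_ofReal_mul_cpow_norm_lpt_one {ν : ℂ} (hν : 2 < ν.re) {n : ℕ}
    (t : (Fin 2 → ℤ) → ℝ) (ht : ∀ z, |t z| ≤ ‖lpt 1 z‖ ^ n) :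
    Summable fun z : {z : Fin 2 → ℤ // z ≠ 0} =>
      ‖(t z.1 : ℂ) * (‖lpt 1 z.1‖ : ℂ) ^ (-(ν + n))‖ := by
  refine ((EisensteinSeries.summable_one_div_norm_rpow hν).subtype _).of_nonneg_of_le
    (fun _ => norm_nonneg _) fun ⟨z, hz⟩ => ?_
  have hz : 0 < ‖z‖ := norm_pos_iff.mpr hz
  calc _ ≤ ‖lpt 1 z‖ ^ (-ν.re) :=
        norm_ofReal_mul_cpow_le (hz.trans_le (norm_le_norm_lpt_one z)) ν (ht z)
    _ ≤ ‖z‖ ^ (-ν.re) := Real.rpow_le_rpow_of_nonpos hz (norm_le_norm_lpt_one z) (by linarith)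

theorem re_pow_two_mul_mul_cpow_norm_lpt_one_eq_sum {z : Fin 2 → ℤ} (hz : z ≠ 0) (m : ℕ)
    (ν : ℂ) :
    ((((z 0 : ℂ) + Complex.I * (z 1 : ℂ)) ^ (2 * m)).re : ℂ) * (‖lpt 1 z‖ : ℂ) ^ (-(ν + 2 * m)) =
      ∑ k ∈ range (m + 1), ((T ℝ (2 * m)).coeff (2 * k) : ℂ) *
        ((((z 0 : ℝ) ^ (2 * k) : ℝ) : ℂ) * (‖lpt 1 z‖ : ℂ) ^ (-(ν + 2 * k))) := by
  have hw : (z 0 : ℂ) + Complex.I * (z 1 : ℂ) ≠ 0 := by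
    rw [← norm_pos_iff, ← norm_lpt_one_eq_norm_complex]
    exact (norm_pos_iff.mpr hz).trans_le (norm_le_norm_lpt_one z)
  simpa [norm_lpt_one_eq_norm_complex] using Complex.re_pow_two_mul_mul_cpow_eq_sum hw m ν

theorem statement19_general (m : ℕ) (ν : ℂ) (hν : 2 < ν.re) :
    (Summable fun z : {z : Fin 2 → ℤ // z ≠ 0} =>
      ‖((((((z.1 0 : ℤ) : ℂ) + Complex.I * ((z.1 1 : ℤ) : ℂ)) ^ (2*m)).re : ℝ) : ℂ)
        * (‖lpt (1 : Matrix (Fin 2) (Fin 2) ℝ) z.1‖ : ℂ) ^ (-(ν + 2*m))‖) ∧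
    (∀ k : ℕ, k ≤ m →
      Summable fun z : {z : Fin 2 → ℤ // z ≠ 0} =>
        ‖((((z.1 0 : ℤ) : ℝ) ^ (2*k) : ℝ) : ℂ)
          * (‖lpt (1 : Matrix (Fin 2) (Fin 2) ℝ) z.1‖ : ℂ) ^ (-(ν + 2*k))‖) ∧
    (∑' z : {z : Fin 2 → ℤ // z ≠ 0},
        ((((((z.1 0 : ℤ) : ℂ) + Complex.I * ((z.1 1 : ℤ) : ℂ)) ^ (2*m)).re : ℝ) : ℂ)
          * (‖lpt (1 : Matrix (Fin 2) (Fin 2) ℝ) z.1‖ : ℂ) ^ (-(ν + 2*m)))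
      = ∑ k ∈ Finset.range (m + 1),
          ((((Polynomial.derivative^[2*k] (Polynomial.Chebyshev.T ℝ (2*m))).eval 0
              / ((2*k).factorial : ℝ) : ℝ)) : ℂ)
            * ∑' z : {z : Fin 2 → ℤ // z ≠ 0},
                ((((z.1 0 : ℤ) : ℝ) ^ (2*k) : ℝ) : ℂ)
                  * (‖lpt (1 : Matrix (Fin 2) (Fin 2) ℝ) z.1‖ : ℂ) ^ (-(ν + 2*k)) := by
  have hsum (k : ℕ) : Summable fun z : {z : Fin 2 → ℤ // z ≠ 0} =>
      ‖((((z.1 0 : ℤ) : ℝ) ^ (2*k) : ℝ) : ℂ) * (‖lpt 1 z.1‖ : ℂ) ^ (-(ν + 2*k))‖ := by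
    simpa only [Nat.cast_mul, Nat.cast_ofNat] using
      summable_norm_ofReal_mul_cpow_norm_lpt_one hν (n := 2 * k) (fun z => (z 0 : ℝ) ^ (2 * k))
        fun z => abs_pow (z 0 : ℝ) (2 * k) ▸
          pow_le_pow_left₀ (abs_nonneg _) (abs_le_norm_lpt_one z 0) _
  refine ⟨?_, fun k _ => hsum k, ?_⟩
  · simpa only [Nat.cast_mul, Nat.cast_ofNat] using
      summable_norm_ofReal_mul_cpow_norm_lpt_one hν (n := 2 * m)
        (fun z => (((z 0 : ℂ) + Complex.I * (z 1 : ℂ)) ^ (2 * m)).re) fun z => by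
          simpa only [norm_pow, norm_lpt_one_eq_norm_complex] using
            Complex.abs_re_le_norm (((z 0 : ℂ) + Complex.I * (z 1 : ℂ)) ^ (2 * m))
  rw [tsum_congr fun z => re_pow_two_mul_mul_cpow_norm_lpt_one_eq_sum z.2 m ν,
    Summable.tsum_finsetSum fun k _ => (hsum k).of_norm.mul_left _]
  refine Finset.sum_congr rfl fun k _ => ?_
  rw [tsum_mul_left, iterate_derivative_eval_zero_div_factorial]

/-- Solid-harmonic/Chebyshev identity for two-dimensional lattice sums:
`Σ'_{z∈ℤ²} A_{2m}(z)/|z|^{ν+2m} = Σ_{k=0}^{m} (T_{2m}^{(2k)}(0)/(2k)!) Σ'_{z∈ℤ²} z₁^{2k}/|z|^{ν+2k}`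
for `Re ν > 2`, with all series converging absolutely. -/
theorem statement19 (m : ℕ) (hm : 1 ≤ m) (ν : ℂ) (hν : 2 < ν.re) :
    (Summable fun z : {z : Fin 2 → ℤ // z ≠ 0} =>
      ‖((((((z.1 0 : ℤ) : ℂ) + Complex.I * ((z.1 1 : ℤ) : ℂ)) ^ (2*m)).re : ℝ) : ℂ)
        * (‖lpt (1 : Matrix (Fin 2) (Fin 2) ℝ) z.1‖ : ℂ) ^ (-(ν + 2*m))‖) ∧
    (∀ k : ℕ, k ≤ m →
      Summable fun z : {z : Fin 2 → ℤ // z ≠ 0} =>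
        ‖((((z.1 0 : ℤ) : ℝ) ^ (2*k) : ℝ) : ℂ)
          * (‖lpt (1 : Matrix (Fin 2) (Fin 2) ℝ) z.1‖ : ℂ) ^ (-(ν + 2*k))‖) ∧
    (∑' z : {z : Fin 2 → ℤ // z ≠ 0},
        ((((((z.1 0 : ℤ) : ℂ) + Complex.I * ((z.1 1 : ℤ) : ℂ)) ^ (2*m)).re : ℝ) : ℂ)
          * (‖lpt (1 : Matrix (Fin 2) (Fin 2) ℝ) z.1‖ : ℂ) ^ (-(ν + 2*m)))
      = ∑ k ∈ Finset.range (m + 1),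
          ((((Polynomial.derivative^[2*k] (Polynomial.Chebyshev.T ℝ (2*m))).eval 0
              / ((2*k).factorial : ℝ) : ℝ)) : ℂ)
            * ∑' z : {z : Fin 2 → ℤ // z ≠ 0},
                ((((z.1 0 : ℤ) : ℝ) ^ (2*k) : ℝ) : ℂ)
                  * (‖lpt (1 : Matrix (Fin 2) (Fin 2) ℝ) z.1‖ : ℂ) ^ (-(ν + 2*k)) :=
  statement19_general m ν hν
end
end
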